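/- Chiral symmetry of the symmetrized unitary: let d, n ≥ 1, let H : (Fin d → ℝ) → ℝ → Matrix n n ℂ be continuous with each H(k,t) Hermitian, and let C be an n×n unitary matrix such that C·H(k,t)·C⁻¹ = -H(k,1-t) for all k and t. Let U(k,t) be the time-evolution operator of H, and define the symmetrized unitary U_S(k,t) = U(k,(1+t)/2) · (U(k,(1-t)/2))ᴴ. Then C·U_S(k,t)·C⁻¹ = (U_S(k,t))ᴴ for all k and t. -/

import Mathlib

/-!
Both `s ↦ C U(s) C⁻¹` and `s ↦ U(1 - s)` solve `Y' = i H(1 - s) Y`, the first by the chiral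
relation and the second by the chain rule. For two solutions `Y, Z` of a linear equation with
skew-Hermitian generator, `Yᴴ Z` is constant; comparing with `s = 0` gives
`C U(s) C⁻¹ = U(1 - s) U(1)ᴴ`. At `s = (1 ± t)/2` the two factors `U(1)` cancel in
`C U_S(t) C⁻¹`, leaving `U((1 - t)/2) U((1 + t)/2)ᴴ = U_S(t)ᴴ`.
-/

open Matrix

attribute [local instance] Matrix.normedAddCommGroup Matrix.normedSpace

theorem HasDerivAt.matrix_mul {𝕜 R : Type*} [NontriviallyNormedField 𝕜] [NormedRing R]
    [NormedAlgebra 𝕜 R] {l m n : Type*} [Fintype l] [Fintype m] [Fintype n]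
    {f : 𝕜 → Matrix l m R} {g : 𝕜 → Matrix m n R} {f' : Matrix l m R} {g' : Matrix m n R}
    {x : 𝕜} (hf : HasDerivAt f f' x) (hg : HasDerivAt g g' x) :
    HasDerivAt (fun y => f y * g y) (f' * g x + f x * g') x := by
  refine hasDerivAt_pi.2 fun i => hasDerivAt_pi.2 fun j => ?_
  have hf_entry (k : m) : HasDerivAt (fun y => f y i k) (f' i k) x :=
    hasDerivAt_pi.1 (hasDerivAt_pi.1 hf i) k
  have hg_entry (k : m) : HasDerivAt (fun y => g y k j) (g' k j) x :=
    hasDerivAt_pi.1 (hasDerivAt_pi.1 hg k) j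
  simpa only [mul_apply, Matrix.add_apply, ← Finset.sum_add_distrib] using
    HasDerivAt.fun_sum fun k _ => (hf_entry k).fun_mul (hg_entry k)

section SkewAdjointFlow

variable {ι : Type*} [Fintype ι] {X U V : ℝ → Matrix ι ι ℂ}

theorem conjTranspose_mul_eq_of_hasDerivAt_skewAdjoint
    (hX : ∀ t, X t ∈ skewAdjoint (Matrix ι ι ℂ))
    (hU : ∀ t, HasDerivAt U (X t * U t) t) (hV : ∀ t, HasDerivAt V (X t * V t) t) (s t : ℝ) :
    (U s)ᴴ * V s = (U t)ᴴ * V t := by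
  have hderiv (r : ℝ) : HasDerivAt (fun r => (U r)ᴴ * V r) 0 r := by
    refine ((hU r).star.matrix_mul (hV r)).congr_deriv ?_
    rw [star_mul, skewAdjoint.mem_iff.1 (hX r), star_eq_conjTranspose, mul_neg, neg_mul,
      mul_assoc, neg_add_cancel]
  exact is_const_of_deriv_eq_zero (fun r => (hderiv r).differentiableAt)
    (fun r => (hderiv r).deriv) s t

theorem mem_unitaryGroup_of_hasDerivAt_skewAdjoint [DecidableEq ι]
    (hX : ∀ t, X t ∈ skewAdjoint (Matrix ι ι ℂ)) (hU : ∀ t, HasDerivAt U (X t * U t) t)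
    (hU₀ : U 0 ∈ unitaryGroup ι ℂ) (t : ℝ) : U t ∈ unitaryGroup ι ℂ := by
  rw [mem_unitaryGroup_iff', star_eq_conjTranspose,
    conjTranspose_mul_eq_of_hasDerivAt_skewAdjoint hX hU hU t 0]
  exact mem_unitaryGroup_iff'.1 hU₀

theorem eq_mul_conjTranspose_mul_of_hasDerivAt_skewAdjoint [DecidableEq ι]
    (hX : ∀ t, X t ∈ skewAdjoint (Matrix ι ι ℂ))
    (hU : ∀ t, HasDerivAt U (X t * U t) t) (hV : ∀ t, HasDerivAt V (X t * V t) t)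
    {t : ℝ} (hUt : U t ∈ unitaryGroup ι ℂ) (s : ℝ) :
    V t = U t * (U s)ᴴ * V s := by
  rw [mul_assoc, conjTranspose_mul_eq_of_hasDerivAt_skewAdjoint hX hU hV s t, ← mul_assoc,
    ← star_eq_conjTranspose, Unitary.mul_star_self_of_mem hUt, one_mul]

end SkewAdjointFlow

theorem mul_mul_conjTranspose_mul_inv_of_mem_unitaryGroup {ι : Type*} [Fintype ι] [DecidableEq ι]
    {C : Matrix ι ι ℂ} (hC : C ∈ unitaryGroup ι ℂ) (A B : Matrix ι ι ℂ) :
    C * (A * Bᴴ) * C⁻¹ = C * A * C⁻¹ * (C * B * C⁻¹)ᴴ := by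
  rw [inv_eq_left_inv (mem_unitaryGroup_iff'.1 hC)]
  simp only [← star_eq_conjTranspose, star_mul, star_star, mul_assoc]
  rw [← mul_assoc (star C) C, Unitary.star_mul_self_of_mem hC, one_mul]

open Complex

structure IsTimeEvolution {ι : Type*} [Fintype ι] [DecidableEq ι] (H U : ℝ → Matrix ι ι ℂ) :
    Prop where
  map_zero : U 0 = 1
  hasDerivAt (t : ℝ) : HasDerivAt U ((-I) • (H t * U t)) t

namespace IsTimeEvolution

variable {ι : Type*} [Fintype ι] [DecidableEq ι] {H U : ℝ → Matrix ι ι ℂ}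

theorem hasDerivAt_smul_mul (hU : IsTimeEvolution H U) (t : ℝ) :
    HasDerivAt U ((-I) • H t * U t) t :=
  smul_mul_assoc (-I) (H t) (U t) ▸ hU.hasDerivAt t

theorem mem_unitaryGroup (hH : ∀ t, (H t).IsHermitian) (hU : IsTimeEvolution H U) (t : ℝ) :
    U t ∈ unitaryGroup ι ℂ :=
  mem_unitaryGroup_of_hasDerivAt_skewAdjoint
    (fun t => (hH t).isSelfAdjoint.smul_mem_skewAdjoint (neg_mem I_mem_skewAdjoint))
    hU.hasDerivAt_smul_mul (hU.map_zero ▸ one_mem _) t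

theorem conj_eq_of_chiral (hH : ∀ t, (H t).IsHermitian) (hU : IsTimeEvolution H U)
    {C : Matrix ι ι ℂ} (hC : C ∈ unitaryGroup ι ℂ) (hCH : ∀ t, C * H t * C⁻¹ = -H (1 - t))
    (s : ℝ) : C * U s * C⁻¹ = U (1 - s) * (U 1)ᴴ := by
  have hCinv : C⁻¹ = star C := inv_eq_left_inv (mem_unitaryGroup_iff'.1 hC)
  have hinv_mul : C⁻¹ * C = 1 := hCinv ▸ Unitary.star_mul_self_of_mem hC
  have hmul_inv : C * C⁻¹ = 1 := hCinv ▸ Unitary.mul_star_self_of_mem hC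
  have hreversed (r : ℝ) :
      HasDerivAt (fun r => U (1 - r)) (I • H (1 - r) * U (1 - r)) r := by
    refine ((hU.hasDerivAt (1 - r)).comp_const_sub 1 r).congr_deriv ?_
    rw [smul_mul_assoc, neg_smul, neg_neg]
  have hconj (r : ℝ) :
      HasDerivAt (fun r => C * U r * C⁻¹) (I • H (1 - r) * (C * U r * C⁻¹)) r := by
    refine (((hasDerivAt_const r C).matrix_mul (hU.hasDerivAt r)).matrix_mul
      (hasDerivAt_const r C⁻¹)).congr_deriv ?_
    calc (0 * U r + C * ((-I) • (H r * U r))) * C⁻¹ + C * U r * 0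
        = (-I) • (C * H r * C⁻¹ * (C * U r * C⁻¹)) := by
          simp only [zero_mul, mul_zero, zero_add, add_zero, mul_smul_comm, smul_mul, mul_assoc,
            ← mul_assoc C⁻¹ C, hinv_mul, one_mul]
      _ = I • H (1 - r) * (C * U r * C⁻¹) := by
          rw [hCH, neg_mul, smul_neg, neg_smul, neg_neg, smul_mul_assoc]
  have hskew (r : ℝ) : I • H (1 - r) ∈ skewAdjoint (Matrix ι ι ℂ) :=
    (hH (1 - r)).isSelfAdjoint.smul_mem_skewAdjoint I_mem_skewAdjoint
  simpa only [sub_zero, hU.map_zero, mul_one, hmul_inv] using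
    eq_mul_conjTranspose_mul_of_hasDerivAt_skewAdjoint hskew hreversed hconj
      (hU.mem_unitaryGroup hH (1 - s)) 0

end IsTimeEvolution

theorem symmetrized_unitary_chiral_symmetry_general {d n : ℕ}
    (H : (Fin d → ℝ) → ℝ → Matrix (Fin n) (Fin n) ℂ)
    (hHherm : ∀ k t, (H k t).IsHermitian)
    (C : Matrix (Fin n) (Fin n) ℂ) (hC : C ∈ Matrix.unitaryGroup (Fin n) ℂ)
    (hCH : ∀ k t, C * H k t * C⁻¹ = -(H k (1 - t)))
    (U : (Fin d → ℝ) → ℝ → Matrix (Fin n) (Fin n) ℂ)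
    (hU0 : ∀ k, U k 0 = 1)
    (hUde : ∀ k t, HasDerivAt (U k) ((-Complex.I) • (H k t * U k t)) t)
    (US : (Fin d → ℝ) → ℝ → Matrix (Fin n) (Fin n) ℂ)
    (hUS : ∀ k t, US k t = U k ((1 + t) / 2) * (U k ((1 - t) / 2))ᴴ) :
    ∀ k t, C * US k t * C⁻¹ = (US k t)ᴴ := by
  intro k t
  have hU : IsTimeEvolution (H k) (U k) := ⟨hU0 k, hUde k⟩
  have hconj := hU.conj_eq_of_chiral (hHherm k) hC (hCH k)
  have hU₁ : (U k 1)ᴴ * U k 1 = 1 :=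
    Unitary.star_mul_self_of_mem (hU.mem_unitaryGroup (hHherm k) 1)
  have hsub₁ : 1 - (1 + t) / 2 = (1 - t) / 2 := by ring
  have hsub₂ : 1 - (1 - t) / 2 = (1 + t) / 2 := by ring
  rw [hUS, mul_mul_conjTranspose_mul_inv_of_mem_unitaryGroup hC, hconj, hconj, hsub₁, hsub₂]
  simp only [conjTranspose_mul, conjTranspose_conjTranspose, mul_assoc, ← mul_assoc (U k 1)ᴴ,
    hU₁, one_mul]

/-- chiral symmetry of the symmetrized unitary
`U_S(k,t) = U(k,(1+t)/2) (U(k,(1-t)/2))ᴴ`: it satisfies `C U_S(k,t) C⁻¹ = (U_S(k,t))ᴴ`. -/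
theorem symmetrized_unitary_chiral_symmetry {d n : ℕ} (hd : 1 ≤ d) (hn : 1 ≤ n)
    (H : (Fin d → ℝ) → ℝ → Matrix (Fin n) (Fin n) ℂ)
    (hHcont : Continuous fun p : (Fin d → ℝ) × ℝ => H p.1 p.2)
    (hHherm : ∀ k t, (H k t).IsHermitian)
    (C : Matrix (Fin n) (Fin n) ℂ) (hC : C ∈ Matrix.unitaryGroup (Fin n) ℂ)
    (hCH : ∀ k t, C * H k t * C⁻¹ = -(H k (1 - t)))
    (U : (Fin d → ℝ) → ℝ → Matrix (Fin n) (Fin n) ℂ)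
    (hU0 : ∀ k, U k 0 = 1)
    (hUde : ∀ k t, HasDerivAt (U k) ((-Complex.I) • (H k t * U k t)) t)
    (US : (Fin d → ℝ) → ℝ → Matrix (Fin n) (Fin n) ℂ)
    (hUS : ∀ k t, US k t = U k ((1 + t) / 2) * (U k ((1 - t) / 2))ᴴ) :
    ∀ k t, C * US k t * C⁻¹ = (US k t)ᴴ :=
  symmetrized_unitary_chiral_symmetry_general H hHherm C hC hCH U hU0 hUde US hUS
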